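/- For every real number y, sin(y) ≥ y − y²/π. -/

import Mathlib

open Real

/- On `[0, π]` the parabola `y - y²/π = y(π - y)/π` is symmetric about `π/2`, as is `sin`, so it
suffices to treat `[0, π/2]`, where `sin y ≥ y - y³/6` and `y³/6 ≤ y²/π` because `π² ≤ 12`.
Outside `[0, π]` the bounds `sin y ≥ y` (for `y ≤ 0`) and `sin y ≥ π - y` (for `y ≥ π`) suffice,
the parabola lying below its tangent line `π - y` at `π`. -/

lemma sub_sq_div_pi_le_pi_sub (y : ℝ) : y - y ^ 2 / π ≤ π - y := by
  have h : 2 * y - π ≤ y ^ 2 / π := by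
    rw [le_div_iff₀ pi_pos]
    nlinarith [sq_nonneg (y - π)]
  linarith

lemma pi_sub_sub_sq_div_pi (y : ℝ) : (π - y) - (π - y) ^ 2 / π = y - y ^ 2 / π := by
  field_simp
  ring

lemma sub_sq_div_pi_le_sin_of_le_pi_div_two {y : ℝ} (hy₀ : 0 ≤ y) (hy : y ≤ π / 2) :
    y - y ^ 2 / π ≤ sin y := by
  have hyπ : y * π ≤ 6 := by nlinarith [pi_lt_d2, pi_pos]
  have hcube : y ^ 3 / 6 ≤ y ^ 2 / π := by
    rw [div_le_div_iff₀ (by norm_num) pi_pos]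
    nlinarith [mul_le_mul_of_nonneg_left hyπ (sq_nonneg y)]
  linarith [sin_ge_sub_cube hy₀]

theorem sin_ge_sub_sq_div_pi (y : ℝ) : Real.sin y ≥ y - y ^ 2 / π := by
  rcases le_total y 0 with hy₀ | hy₀
  · have : 0 ≤ y ^ 2 / π := by positivity
    linarith [le_sin hy₀]
  rcases le_total y (π / 2) with hy₁ | hy₁
  · exact sub_sq_div_pi_le_sin_of_le_pi_div_two hy₀ hy₁
  rcases le_total y π with hy₂ | hy₂
  · have h := sub_sq_div_pi_le_sin_of_le_pi_div_two (y := π - y) (by linarith) (by linarith)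
    rwa [pi_sub_sub_sq_div_pi, sin_pi_sub] at h
  · have h : sin (y - π) ≤ y - π := sin_le (by linarith)
    rw [sin_sub_pi] at h
    linarith [sub_sq_div_pi_le_pi_sub y]
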